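/- Let E be a graph and F a topological filter on Path(E). Then G(E) endowed with the topology τ_F, in which every nonzero element is isolated and the sets U_F(0) = {a b^{-1} : a, b ∈ F} ∪ {0} for F ∈ 𝓕 form a neighbourhood base at 0, is a Hausdorff topological inverse semigroup (multiplication and inversion are continuous). -/

import Mathlib

universe u

/-- A directed graph. -/
structure DiGraph : Type (u + 1) where
  V : Type u
  E : Type u
  s : E → V
  r : E → V

namespace DiGraph

variable (G : DiGraph.{u})

/-- A list of edges forms a valid path starting at vertex `v`. -/
def Valid (v : G.V) : List G.E → Prop
  | [] => True
  | e :: l => G.s e = v ∧ Valid (G.r e) l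

/-- the endpoint of a list of edges starting at `v`. -/
def dst (v : G.V) : List G.E → G.V
  | [] => v
  | e :: l => dst (G.r e) l

variable {G}

lemma dst_append (v : G.V) (l₁ l₂ : List G.E) :
    G.dst v (l₁ ++ l₂) = G.dst (G.dst v l₁) l₂ := by
  induction l₁ generalizing v with
  | nil => rfl
  | cons e t ih => simp [dst, ih]

lemma valid_append (v : G.V) (l₁ l₂ : List G.E) :
    G.Valid v (l₁ ++ l₂) ↔ G.Valid v l₁ ∧ G.Valid (G.dst v l₁) l₂ := by
  induction l₁ generalizing v with
  | nil => simp [Valid, dst]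
  | cons e t ih => simp [Valid, dst, ih, and_assoc]

variable (G) in
/-- A (finite, directed) path in `G`: a source vertex together with a
composable list of edges.  Paths of length zero are the vertices. -/
structure GPath : Type u where
  src : G.V
  edges : List G.E
  valid : G.Valid src edges

/-- The range (end vertex) of a path. -/
def GPath.rng (p : G.GPath) : G.V := G.dst p.src p.edges

/-- Concatenation of composable paths. -/
def GPath.comp (p q : G.GPath) (h : p.rng = q.src) : G.GPath :=
  ⟨p.src, p.edges ++ q.edges, by
    rw [valid_append]
    exact ⟨p.valid, by rw [show G.dst p.src p.edges = q.src from h]; exact q.valid⟩⟩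

lemma GPath.comp_rng (p q : G.GPath) (h : p.rng = q.src) : (p.comp q h).rng = q.rng := by
  show G.dst p.src (p.edges ++ q.edges) = _
  rw [dst_append, show G.dst p.src p.edges = q.src from h]; rfl

/-- If `p` is a prefix of the path `q`, the remaining path (so that
`q = p.comp (p.strip q _ _)`). -/
def GPath.strip (p q : G.GPath) (hs : p.src = q.src) (hp : p.edges <+: q.edges) : G.GPath :=
  ⟨p.rng, q.edges.drop p.edges.length, by
    obtain ⟨t, ht⟩ := hp
    have h1 : p.edges ++ q.edges.drop p.edges.length = q.edges := by
      rw [← ht, List.drop_left]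
    have h2 : G.Valid p.src (p.edges ++ q.edges.drop p.edges.length) := by
      rw [h1, hs]; exact q.valid
    exact ((valid_append _ _ _).mp h2).2⟩

lemma GPath.strip_rng (p q : G.GPath) (hs : p.src = q.src) (hp : p.edges <+: q.edges) :
    (p.strip q hs hp).rng = q.rng := by
  show G.dst p.rng (q.edges.drop p.edges.length) = G.dst q.src q.edges
  obtain ⟨t, ht⟩ := hp
  have h1 : p.edges ++ q.edges.drop p.edges.length = q.edges := by
    rw [← ht, List.drop_left]
  conv_rhs => rw [← hs, ← h1]
  rw [dst_append]; rfl

variable (G) in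
/-- A nonzero element `a b⁻¹` of the graph inverse semigroup: a pair of
paths with the same range. -/
structure NZ : Type u where
  a : G.GPath
  b : G.GPath
  h : a.rng = b.rng

/-- The graph inverse semigroup `G(E)` over a directed graph, in normal form:
the elements `a b⁻¹` with `r(a) = r(b)`, together with a zero element. -/
def GIS (G : DiGraph.{u}) : Type u := Option (NZ G)

instance : Zero (GIS G) := ⟨none⟩

open scoped Classical in
/-- The multiplication of the graph inverse semigroup:
`a b⁻¹ · c d⁻¹ = a c₁ d⁻¹` if `c = b c₁`, `a (d b₁)⁻¹` if `b = c b₁`, and `0` otherwise. -/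
noncomputable instance : Mul (GIS G) :=
  ⟨fun x y =>
    match x, y with
    | none, _ => none
    | some _, none => none
    | some ⟨a, b, hab⟩, some ⟨c, d, hcd⟩ =>
      if h : b.src = c.src ∧ b.edges <+: c.edges then
        some ⟨a.comp (b.strip c h.1 h.2) hab, d, by
          exact (GPath.comp_rng _ _ _).trans ((GPath.strip_rng _ _ _ _).trans hcd)⟩
      else if h' : c.src = b.src ∧ c.edges <+: b.edges then
        some ⟨a, d.comp (c.strip b h'.1 h'.2) hcd.symm, by
          exact hab.trans ((GPath.comp_rng _ _ _).trans (GPath.strip_rng _ _ _ _)).symm⟩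
      else none⟩

/-- The nonzero element `a b⁻¹` of `G(E)` determined by a pair of paths
with the same range. -/
def GIS.nz (n : NZ G) : GIS G := some n

/-- The inversion of the graph inverse semigroup: `(u v⁻¹)⁻¹ = v u⁻¹`. -/
def GIS.inv : GIS G → GIS G
  | none => none
  | some ⟨a, b, h⟩ => some ⟨b, a, h.symm⟩

end DiGraph
namespace DiGraph

variable {G : DiGraph.{u}}

/-- membership predicate for the basic neighbourhoods of zero: all of
`a b⁻¹` with `a, b ∈ F`, together with `0`. -/
def inUF (F : Set G.GPath) : GIS G → Prop
  | none => True
  | some n => n.a ∈ F ∧ n.b ∈ F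

/-- The basic neighbourhood `U_F(0) = {a b⁻¹ : a, b ∈ F} ∪ {0}` of zero. -/
def UF (F : Set G.GPath) : Set (GIS G) := {x | inUF F x}

lemma inUF_mono {F₁ F₂ : Set G.GPath} (h : F₁ ⊆ F₂) :
    ∀ x : GIS G, inUF F₁ x → inUF F₂ x := by
  intro x hx
  cases x with
  | none => trivial
  | some n => exact ⟨h hx.1, h hx.2⟩

/-- The topology `τ_𝓕` on `G(E)` determined by a filter `𝓕` on `Path(E)`:
every nonzero element is isolated, and the sets `U_F(0)`, `F ∈ 𝓕`, form a
neighbourhood base at `0`. -/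
def tauF (𝓕 : Filter G.GPath) : TopologicalSpace (GIS G) where
  IsOpen U := (0 : GIS G) ∈ U → ∃ F ∈ 𝓕, UF F ⊆ U
  isOpen_univ := fun _ => ⟨Set.univ, Filter.univ_mem, Set.subset_univ _⟩
  isOpen_inter := fun U V hU hV h0 => by
    obtain ⟨F₁, hF₁, hs₁⟩ := hU h0.1
    obtain ⟨F₂, hF₂, hs₂⟩ := hV h0.2
    exact ⟨F₁ ∩ F₂, Filter.inter_mem hF₁ hF₂, fun x hx =>
      ⟨hs₁ (inUF_mono Set.inter_subset_left x hx),
       hs₂ (inUF_mono Set.inter_subset_right x hx)⟩⟩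
  isOpen_sUnion := fun S hS h0 => by
    obtain ⟨U, hU, h0U⟩ := h0
    obtain ⟨F, hF, hs⟩ := hS U hU h0U
    exact ⟨F, hF, hs.trans (Set.subset_sUnion_of_mem hU)⟩

/-- The prefix partial order on paths: `a ≤ b` iff `b` is a prefix of `a`. -/
def prefLE (a b : G.GPath) : Prop := b.src = a.src ∧ b.edges <+: a.edges

/-- An ideal of `(Path(E), ≤)`: a set `A` with `↓A = A`. -/
def IsIdeal (A : Set G.GPath) : Prop :=
  ∀ a b : G.GPath, prefLE a b → b ∈ A → a ∈ A

/-- A topological filter on `Path(E)`: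
(i) for `F ∈ 𝓕` and paths `a, b` with `r(a) = r(b)`, the set
`F \ {bk : k ∈ Path(E), ak ∉ F}` belongs to `𝓕`;
(ii) `𝓕` contains all cofinite subsets of `Path(E)`;
(iii) `𝓕` has a base consisting of ideals of `(Path(E), ≤)`. -/
def IsTopFilter (𝓕 : Filter G.GPath) : Prop :=
  (∀ F ∈ 𝓕, ∀ a b : G.GPath, a.rng = b.rng →
      F \ {p | ∃ (k : G.GPath) (h1 : b.rng = k.src) (h2 : a.rng = k.src),
        p = b.comp k h1 ∧ a.comp k h2 ∉ F} ∈ 𝓕) ∧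
  𝓕 ≤ Filter.cofinite ∧
  (∀ F ∈ 𝓕, ∃ I ∈ 𝓕, I ⊆ F ∧ IsIdeal I)

variable (G) in
/-- The filter `𝓕_ω` generated by the sets `U_n = {u ∈ Path(E) : |u| > n}`. -/
def Fomega : Filter G.GPath :=
  Filter.generate {S | ∃ n : ℕ, S = {u : G.GPath | n < u.edges.length}}

variable (G) in
/-- `U_n(0) = {u v⁻¹ : min{|u|,|v|} > n} ∪ {0}`. -/
def Un (n : ℕ) : Set (GIS G) := UF {u : G.GPath | n < u.edges.length}

end DiGraph

/-!
Nonzero elements are isolated, so continuity only has to be checked at points involving `0`,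
where `U_F(0)` is a neighbourhood base. Inversion swaps the two paths and so preserves every
`U_F(0)`. For multiplication, each axiom of a topological filter handles one case: (i) gives
translation by a fixed `a b⁻¹`, (ii) discards the finitely many prefixes of a fixed path (and
separates `0` from `a b⁻¹`), and (iii) makes `U_I(0) · U_I(0) ⊆ U_I(0)` for an ideal `I`.
-/

namespace DiGraph

open Filter Topology

variable {G : DiGraph.{u}}

lemma GPath.ext_of_src_edges {p q : G.GPath} (hs : p.src = q.src) (he : p.edges = q.edges) :
    p = q := by
  cases p; cases q; cases hs; cases he; rfl

lemma GPath.comp_strip (p q : G.GPath) (hs : p.src = q.src) (hp : p.edges <+: q.edges) :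
    p.comp (p.strip q hs hp) rfl = q := by
  refine GPath.ext_of_src_edges hs ?_
  show p.edges ++ q.edges.drop p.edges.length = q.edges
  obtain ⟨t, ht⟩ := hp
  rw [← ht, List.drop_left]

lemma finite_setOf_prefLE (b : G.GPath) : {p : G.GPath | prefLE b p}.Finite := by
  have hedges : (GPath.edges '' {p | prefLE b p}).Finite :=
    b.edges.inits.finite_toSet.subset <| by
      rintro l ⟨p, hp, rfl⟩
      simpa using hp.2
  refine hedges.of_finite_image fun p hp q hq he => ?_
  exact GPath.ext_of_src_edges (hp.1.trans hq.1.symm) he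

lemma setOf_not_prefLE_mem {𝓕 : Filter G.GPath} (h𝓕 : 𝓕 ≤ cofinite) (b : G.GPath) :
    {p : G.GPath | ¬ prefLE b p} ∈ 𝓕 :=
  h𝓕 (finite_setOf_prefLE b).compl_mem_cofinite

open scoped Classical in
lemma GIS.nz_mul_nz (a b c d : G.GPath) (hab : a.rng = b.rng) (hcd : c.rng = d.rng) :
    (GIS.nz ⟨a, b, hab⟩ : GIS G) * GIS.nz ⟨c, d, hcd⟩ =
      if h : b.src = c.src ∧ b.edges <+: c.edges then
        GIS.nz ⟨a.comp (b.strip c h.1 h.2) hab, d,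
          (GPath.comp_rng _ _ _).trans ((GPath.strip_rng _ _ _ _).trans hcd)⟩
      else if h' : c.src = b.src ∧ c.edges <+: b.edges then
        GIS.nz ⟨a, d.comp (c.strip b h'.1 h'.2) hcd.symm,
          hab.trans ((GPath.comp_rng _ _ _).trans (GPath.strip_rng _ _ _ _)).symm⟩
      else 0 :=
  rfl

section TopFilter

variable {𝓕 : Filter G.GPath}

/-- When `c = b k`, `a b⁻¹ · c d⁻¹ = a k d⁻¹`: condition (i) removes the `c` with `a k ∉ F`,
and (ii) the finitely many prefixes `c` of `b`, where the product is `a (d k)⁻¹`. -/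
lemma exists_mapsTo_nz_mul_UF (h : IsTopFilter 𝓕) (a b : G.GPath) (hab : a.rng = b.rng)
    {F : Set G.GPath} (hF : F ∈ 𝓕) :
    ∃ F' ∈ 𝓕, Set.MapsTo (GIS.nz ⟨a, b, hab⟩ * ·) (UF F') (UF F) := by
  refine ⟨(F \ {p | ∃ (k : G.GPath) (h1 : b.rng = k.src) (h2 : a.rng = k.src),
        p = b.comp k h1 ∧ a.comp k h2 ∉ F}) ∩ {p | ¬ prefLE b p},
    inter_mem (h.1 F hF a b hab) (setOf_not_prefLE_mem h.2.1 b), ?_⟩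
  rintro (_ | ⟨c, d, hcd⟩) hq
  · trivial
  obtain ⟨⟨⟨-, hc_good⟩, hc_not_pref⟩, ⟨hdF, -⟩, -⟩ := hq
  change GIS.nz _ * GIS.nz _ ∈ UF F
  rw [GIS.nz_mul_nz]
  split_ifs with hbc hcb
  · refine ⟨not_not.1 fun hk => hc_good ?_, hdF⟩
    exact ⟨b.strip c hbc.1 hbc.2, rfl, hab, (b.comp_strip c hbc.1 hbc.2).symm, hk⟩
  · exact absurd hcb hc_not_pref
  · trivial

lemma exists_mapsTo_mul_nz_UF (h : IsTopFilter 𝓕) (c d : G.GPath) (hcd : c.rng = d.rng)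
    {F : Set G.GPath} (hF : F ∈ 𝓕) :
    ∃ F' ∈ 𝓕, Set.MapsTo (· * GIS.nz ⟨c, d, hcd⟩) (UF F') (UF F) := by
  refine ⟨(F \ {p | ∃ (k : G.GPath) (h1 : c.rng = k.src) (h2 : d.rng = k.src),
        p = c.comp k h1 ∧ d.comp k h2 ∉ F}) ∩ {p | ¬ prefLE c p},
    inter_mem (h.1 F hF d c hcd.symm) (setOf_not_prefLE_mem h.2.1 c), ?_⟩
  rintro (_ | ⟨a, b, hab⟩) hq
  · trivial
  obtain ⟨⟨⟨haF, -⟩, -⟩, ⟨-, hb_good⟩, hb_not_pref⟩ := hq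
  change GIS.nz _ * GIS.nz _ ∈ UF F
  rw [GIS.nz_mul_nz]
  split_ifs with hbc hcb
  · exact absurd hbc hb_not_pref
  · refine ⟨haF, not_not.1 fun hk => hb_good ?_⟩
    exact ⟨c.strip b hcb.1 hcb.2, rfl, hcd.symm, (c.comp_strip b hcb.1 hcb.2).symm, hk⟩
  · trivial

/-- A nonzero product `a b⁻¹ · c d⁻¹` is `a k d⁻¹` or `a (d k)⁻¹`, and an ideal containing
`a` and `d` contains their extensions. -/
lemma exists_mul_mem_UF (h : IsTopFilter 𝓕) {F : Set G.GPath} (hF : F ∈ 𝓕) :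
    ∃ F' ∈ 𝓕, Set.MapsTo (fun p => p.1 * p.2) (UF F' ×ˢ UF F') (UF F) := by
  obtain ⟨I, hI, hIF, hideal⟩ := h.2.2 F hF
  refine ⟨I, hI, ?_⟩
  rintro ⟨_ | ⟨a, b, hab⟩, _ | ⟨c, d, hcd⟩⟩ ⟨hx, hy⟩
  all_goals try trivial
  change GIS.nz _ * GIS.nz _ ∈ UF F
  rw [GIS.nz_mul_nz]
  split_ifs
  · exact ⟨hIF (hideal _ a ⟨rfl, List.prefix_append _ _⟩ hx.1), hIF hy.2⟩
  · exact ⟨hIF hx.1, hIF (hideal _ d ⟨rfl, List.prefix_append _ _⟩ hy.2)⟩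
  · trivial

lemma GIS.inv_mem_UF {F : Set G.GPath} {x : GIS G} (hx : x ∈ UF F) : GIS.inv x ∈ UF F := by
  rcases x with _ | ⟨a, b, hab⟩
  exacts [trivial, ⟨hx.2, hx.1⟩]

end TopFilter

section Topology

variable (𝓕 : Filter G.GPath)

lemma isOpen_singleton_nz (n : NZ G) : IsOpen[tauF 𝓕] {GIS.nz n} :=
  fun h0 => absurd (Set.mem_singleton_iff.1 h0) (Option.some_ne_none n).symm

lemma nhds_nz (n : NZ G) : @nhds _ (tauF 𝓕) (GIS.nz n) = pure (GIS.nz n) :=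
  @isOpen_singleton_iff_nhds_eq_pure _ (tauF 𝓕) _ |>.1 (isOpen_singleton_nz 𝓕 n)

lemma hasBasis_nhds_zero : (@nhds _ (tauF 𝓕) 0).HasBasis (· ∈ 𝓕) UF := by
  let := tauF 𝓕
  refine ⟨fun s => ⟨fun hs => ?_, fun ⟨F, hF, hFs⟩ => ?_⟩⟩
  · obtain ⟨t, hts, hto, h0t⟩ := mem_nhds_iff.1 hs
    obtain ⟨F, hF, hFt⟩ := hto h0t
    exact ⟨F, hF, hFt.trans hts⟩
  · exact mem_of_superset (IsOpen.mem_nhds (fun _ => ⟨F, hF, subset_rfl⟩) trivial) hFs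

variable {𝓕}

theorem t2Space_tauF (h𝓕 : 𝓕 ≤ cofinite) : @T2Space (GIS G) (tauF 𝓕) := by
  let := tauF 𝓕
  have zero_nz : ∀ n : NZ G, Disjoint (𝓝 (0 : GIS G)) (𝓝 (GIS.nz n)) := fun n =>
    disjoint_of_disjoint_of_mem (s := UF {n.a}ᶜ) (t := {GIS.nz n})
      (Set.disjoint_singleton_right.2 fun hn => hn.1 rfl)
      ((hasBasis_nhds_zero 𝓕).mem_of_mem (h𝓕 (Set.finite_singleton n.a).compl_mem_cofinite))
      (IsOpen.mem_nhds (isOpen_singleton_nz 𝓕 n) rfl)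
  refine t2Space_iff_disjoint_nhds.2 ?_
  rintro (_ | m) (_ | n) hne
  · exact absurd rfl hne
  · exact zero_nz n
  · exact (zero_nz m).symm
  · change Disjoint (𝓝 (GIS.nz m)) (𝓝 (GIS.nz n))
    rw [nhds_nz, nhds_nz]
    exact disjoint_pure_pure.2 hne

theorem continuous_mul_tauF (h : IsTopFilter 𝓕) :
    @Continuous (GIS G × GIS G) (GIS G) (@instTopologicalSpaceProd _ _ (tauF 𝓕) (tauF 𝓕))
      (tauF 𝓕) (fun p => p.1 * p.2) := by
  let := tauF 𝓕
  have h0 := hasBasis_nhds_zero 𝓕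
  refine continuous_iff_continuousAt.2 fun ⟨x, y⟩ => ?_
  rw [ContinuousAt, nhds_prod_eq]
  rcases x with _ | m <;> rcases y with _ | n
  · exact (h0.prod_self.tendsto_iff h0).2 fun F hF => exists_mul_mem_UF h hF
  · change Tendsto _ (𝓝 0 ×ˢ 𝓝 (GIS.nz n)) (𝓝 (0 * GIS.nz n))
    rw [nhds_nz, prod_pure, tendsto_map'_iff]
    exact (h0.tendsto_iff h0).2 fun F hF => exists_mapsTo_mul_nz_UF h n.a n.b n.h hF
  · change Tendsto _ (𝓝 (GIS.nz m) ×ˢ 𝓝 0) (𝓝 (GIS.nz m * 0))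
    rw [nhds_nz, pure_prod, tendsto_map'_iff]
    exact (h0.tendsto_iff h0).2 fun F hF => exists_mapsTo_nz_mul_UF h m.a m.b m.h hF
  · change Tendsto _ (𝓝 (GIS.nz m) ×ˢ 𝓝 (GIS.nz n)) _
    rw [nhds_nz, nhds_nz, pure_prod, map_pure]
    exact tendsto_pure_nhds _ _

theorem continuous_inv_tauF : @Continuous (GIS G) (GIS G) (tauF 𝓕) (tauF 𝓕) GIS.inv := by
  let := tauF 𝓕
  have h0 := hasBasis_nhds_zero 𝓕
  refine continuous_iff_continuousAt.2 ?_
  rintro (_ | n)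
  · exact (h0.tendsto_iff h0).2 fun F hF => ⟨F, hF, fun _ => GIS.inv_mem_UF⟩
  · change Tendsto _ (𝓝 (GIS.nz n)) _
    rw [nhds_nz]
    exact tendsto_pure_nhds _ _

end Topology

end DiGraph

open DiGraph in
theorem tauF_topological_inverse_semigroup_general (G : DiGraph.{u})
    (𝓕 : Filter G.GPath) (h : IsTopFilter 𝓕) :
    @T2Space (GIS G) (tauF 𝓕) ∧
    @Continuous (GIS G × GIS G) (GIS G)
      (@instTopologicalSpaceProd _ _ (tauF 𝓕) (tauF 𝓕)) (tauF 𝓕)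
      (fun p => p.1 * p.2) ∧
    @Continuous (GIS G) (GIS G) (tauF 𝓕) (tauF 𝓕) GIS.inv :=
  ⟨t2Space_tauF h.2.1, continuous_mul_tauF h, continuous_inv_tauF⟩

open DiGraph in
/-- Let `E` be a graph and `𝓕` a (free, proper) topological filter on
`Path(E)`. Then `G(E)` endowed with the topology `τ_𝓕` — in which every
nonzero element is isolated and the sets `U_F(0) = {a b⁻¹ : a, b ∈ F} ∪ {0}`,
`F ∈ 𝓕`, form a neighbourhood base at `0` — is a Hausdorff topological
inverse semigroup: multiplication and inversion are continuous. -/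
theorem tauF_topological_inverse_semigroup (G : DiGraph.{u})
    (𝓕 : Filter G.GPath) [𝓕.NeBot] (h : IsTopFilter 𝓕) :
    @T2Space (GIS G) (tauF 𝓕) ∧
    @Continuous (GIS G × GIS G) (GIS G)
      (@instTopologicalSpaceProd _ _ (tauF 𝓕) (tauF 𝓕)) (tauF 𝓕)
      (fun p => p.1 * p.2) ∧
    @Continuous (GIS G) (GIS G) (tauF 𝓕) (tauF 𝓕) GIS.inv :=
  tauF_topological_inverse_semigroup_general G 𝓕 h
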